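/- Let A and B be central arrangements in a vector space V, let S ⊆ A with ⟨S⟩_A = A and T ⊆ B with ⟨T⟩_B = B. Suppose ψ : L(A) → L(B) is a poset isomorphism and φ ∈ GL(V) are such that ψ(S) = φ(S) = T and ψ(H) = φ(H) for every H ∈ S. Then φ maps A onto B, i.e. {φ(H) : H ∈ A} = B. -/

import Mathlib

open Submodule

/-! ## Basic definitions for hyperplane arrangements -/

/-- The linear form `∑_{i ∈ I} x_i` on `K^n`. -/
noncomputable def sumForm (n : ℕ) (K : Type*) [Field K] (I : Finset (Fin n)) :
    (Fin n → K) →ₗ[K] K :=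
  ∑ i ∈ I, LinearMap.proj i

/-- The hyperplane `H_I = ker (∑_{i ∈ I} x_i)` in `K^n`. -/
noncomputable def hypI (n : ℕ) (K : Type*) [Field K] (I : Finset (Fin n)) :
    Submodule K (Fin n → K) :=
  LinearMap.ker (sumForm n K I)

/-- The nonempty vertex subsets of `G` inducing connected subgraphs. -/
def connSets {n : ℕ} (G : SimpleGraph (Fin n)) : Set (Finset (Fin n)) :=
  {I | I.Nonempty ∧ (G.induce (I : Set (Fin n))).Connected}

/-- The connected subgraph arrangement `A_G(K)` in `K^n`. -/
noncomputable def connArr (K : Type*) [Field K] {n : ℕ} (G : SimpleGraph (Fin n)) :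
    Set (Submodule K (Fin n → K)) :=
  (hypI n K) '' (connSets G)

/-- The intersection lattice of a central arrangement: all intersections of
subfamilies of `A` (with the empty intersection being the ambient space `⊤`). -/
def lat {K V : Type*} [Field K] [AddCommGroup V] [Module K V]
    (A : Set (Submodule K V)) : Set (Submodule K V) :=
  {X | ∃ B ⊆ A, X = sInf B}

/-- A central arrangement: a finite set of hyperplanes (coatoms of the submodule
lattice) in `V`. -/
def IsCentralArr {K V : Type*} [Field K] [AddCommGroup V] [Module K V]
    (A : Set (Submodule K V)) : Prop :=
  A.Finite ∧ ∀ H ∈ A, IsCoatom H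

/-- Two arrangements in `V` are linearly isomorphic. -/
def LinIsom {K V : Type*} [Field K] [AddCommGroup V] [Module K V]
    (A B : Set (Submodule K V)) : Prop :=
  ∃ φ : V ≃ₗ[K] V, B = (Submodule.map (φ : V →ₗ[K] V)) '' A

/-- Two arrangements are `L`-equivalent: their intersection lattices are
isomorphic posets. -/
def LEquiv {K V W : Type*} [Field K] [AddCommGroup V] [Module K V]
    [AddCommGroup W] [Module K W]
    (A : Set (Submodule K V)) (B : Set (Submodule K W)) : Prop :=
  Nonempty (↥(lat A) ≃o ↥(lat B))

/-- An arrangement `A` in `V` is projectively unique if every central arrangement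
in `V` that is `L`-equivalent to `A` is linearly isomorphic to `A`. -/
def ProjUnique {K V : Type*} [Field K] [AddCommGroup V] [Module K V]
    (A : Set (Submodule K V)) : Prop :=
  ∀ B : Set (Submodule K V), IsCentralArr B → LEquiv B A → LinIsom B A

/-- `Gen_i(A,S)`. -/
def Gen {K V : Type*} [Field K] [AddCommGroup V] [Module K V]
    (A S : Set (Submodule K V)) : ℕ → Set (Submodule K V)
  | 0 => S
  | (i+1) => {H | H ∈ A ∧ ∃ J ⊆ lat (Gen A S i), H = sSup J}

/-- The subarrangement `⟨S⟩_A` of `A` generated by `S`. -/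
def genSpan {K V : Type*} [Field K] [AddCommGroup V] [Module K V]
    (A S : Set (Submodule K V)) : Set (Submodule K V) :=
  ⋃ i, Gen A S i

/-- An arrangement is irreducible if it is not (linearly isomorphic to)
a nontrivial product of two lower-dimensional arrangements. -/
def IsIrredArr {K V : Type*} [Field K] [AddCommGroup V] [Module K V]
    (A : Set (Submodule K V)) : Prop :=
  ¬ ∃ U W : Submodule K V, IsCompl U W ∧ U ≠ ⊥ ∧ W ≠ ⊥ ∧ ∀ H ∈ A, U ≤ H ∨ W ≤ H

/-! ## Freeness -/

/-- The linear form `f` as a degree one polynomial. -/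
noncomputable def toPoly {n : ℕ} {K : Type*} [Field K] (f : (Fin n → K) →ₗ[K] K) :
    MvPolynomial (Fin n) K :=
  ∑ i, MvPolynomial.C (f (Pi.single i 1)) * MvPolynomial.X i

/-- The module `D(A)` of logarithmic derivations of an arrangement in `K^n`:
all `θ` with `θ(α_H) ∈ (α_H)` for every defining form `α_H` of every `H ∈ A`. -/
noncomputable def logDer (K : Type*) [Field K] {n : ℕ}
    (A : Set (Submodule K (Fin n → K))) :
    Submodule (MvPolynomial (Fin n) K)
      (Derivation K (MvPolynomial (Fin n) K) (MvPolynomial (Fin n) K)) where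
  carrier := {θ | ∀ H ∈ A, ∀ f : (Fin n → K) →ₗ[K] K, LinearMap.ker f = H →
      θ (toPoly f) ∈ Ideal.span {toPoly f}}
  add_mem' := by
    intro a b ha hb H hH f hf
    simpa using add_mem (ha H hH f hf) (hb H hH f hf)
  zero_mem' := by
    intro H hH f hf
    simp
  smul_mem' := by
    intro c θ hθ H hH f hf
    simpa [smul_eq_mul] using Ideal.mul_mem_left _ c (hθ H hH f hf)

/-- An arrangement in `K^n` is free if its module of logarithmic derivations is
free over the polynomial ring. -/
def IsFreeArr (K : Type*) [Field K] {n : ℕ}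
    (A : Set (Submodule K (Fin n → K))) : Prop :=
  Module.Free (MvPolynomial (Fin n) K) ↥(logDer K A)

/-- Freeness with a prescribed tuple of exponents: there is a basis of `D(A)`
consisting of homogeneous derivations of the given degrees. -/
def IsFreeExp (K : Type*) [Field K] {n : ℕ} (A : Set (Submodule K (Fin n → K)))
    (e : Fin n → ℕ) : Prop :=
  ∃ b : Module.Basis (Fin n) (MvPolynomial (Fin n) K) ↥(logDer K A),
    ∀ i j, ((b i : Derivation K (MvPolynomial (Fin n) K) (MvPolynomial (Fin n) K))
      (MvPolynomial.X j)).IsHomogeneous (e i)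

/-- The restriction `A^X` of an arrangement to a flat `X`, as an arrangement in `X`. -/
def restrictArr {K V : Type*} [Field K] [AddCommGroup V] [Module K V]
    (A : Set (Submodule K V)) (X : Submodule K V) : Set (Submodule K ↥X) :=
  {Y | ∃ H ∈ A, ¬ X ≤ H ∧ Y = Submodule.comap X.subtype H}

/-- Freeness with prescribed exponents for an arrangement in an abstract space:
transport along a linear isomorphism with `K^d`. -/
def IsFreeExpOn {K W : Type*} [Field K] [AddCommGroup W] [Module K W]
    (A : Set (Submodule K W)) (d : ℕ) (e : Fin d → ℕ) : Prop :=
  ∃ φ : W ≃ₗ[K] (Fin d → K),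
    IsFreeExp K ((Submodule.map (φ : W →ₗ[K] (Fin d → K))) '' A) e

/-- Accuracy: `A` is free with (sorted) exponents `e₁ ≤ … ≤ e_n` and for each
`1 ≤ d ≤ n` some flat `X ∈ L(A)` of dimension `d` has free restriction `A^X`
with exponents `(e₁, …, e_d)`. -/
def IsAccurate (K : Type*) [Field K] {n : ℕ}
    (A : Set (Submodule K (Fin n → K))) : Prop :=
  ∃ e : Fin n → ℕ, Monotone e ∧ IsFreeExp K A e ∧
    ∀ d : ℕ, 1 ≤ d → ∀ (hdn : d ≤ n), ∃ X ∈ lat A, Module.finrank K ↥X = d ∧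
      IsFreeExpOn (restrictArr A X) d (fun i => e ⟨i.1, lt_of_lt_of_le i.2 hdn⟩)

/-! ## Graphs -/

/-- The path graph on vertices `0, 1, …, n-1` (consecutive vertices adjacent). -/
def pathGraph' (n : ℕ) : SimpleGraph (Fin n) :=
  SimpleGraph.fromRel (fun a b => a.1 + 1 = b.1)

/-- The almost-path graph `A_{n,k}` (vertices `1, …, n+1` of the paper are
`0, …, n` here): a path on `0, …, n-1` plus the vertex `n` joined to `k-1`. -/
def almostPathGraph (n k : ℕ) : SimpleGraph (Fin (n+1)) :=
  SimpleGraph.fromRel (fun a b => (a.1 + 1 = b.1 ∧ b.1 < n) ∨ (a.1 + 1 = k ∧ b.1 = n))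

/-- The path-with-triangle graph `Δ_{n,k}` (vertices `1, …, n+1` of the paper are
`0, …, n` here): a path on `0, …, n-1` plus the vertex `n` joined to `k-1` and `k`. -/
def pathTriangleGraph (n k : ℕ) : SimpleGraph (Fin (n+1)) :=
  SimpleGraph.fromRel (fun a b =>
    (a.1 + 1 = b.1 ∧ b.1 < n) ∨ ((a.1 + 1 = k ∨ a.1 = k) ∧ b.1 = n))

/-! ## Factored and inductively factored arrangements -/

/-- The localization `A_X`. -/
def locArr {K V : Type*} [Field K] [AddCommGroup V] [Module K V]
    (A : Set (Submodule K V)) (X : Submodule K V) : Set (Submodule K V) :=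
  {H | H ∈ A ∧ X ≤ H}

/-- `P` is a partition of the set `A` (into nonempty blocks). -/
def IsPartitionOf {α : Type*} (A : Set α) (P : Set (Set α)) : Prop :=
  (∀ B ∈ P, B.Nonempty) ∧ (∀ B ∈ P, B ⊆ A) ∧ ∀ a ∈ A, ∃! B, B ∈ P ∧ a ∈ B

/-- A partition of an arrangement is independent if any transversal choice of
hyperplanes, one from each block, is linearly independent (the codimension of the
intersection equals the number of blocks). -/
def IsIndepPartition {K V : Type*} [Field K] [AddCommGroup V] [Module K V]
    (P : Set (Set (Submodule K V))) : Prop :=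
  ∀ f : Set (Submodule K V) → Submodule K V, (∀ B ∈ P, f B ∈ B) →
    Module.finrank K V = P.ncard + Module.finrank K ↥(⨅ B ∈ P, f B)

/-- A nice partition (factorization) of an arrangement. -/
def IsNicePartition {K V : Type*} [Field K] [AddCommGroup V] [Module K V]
    (A : Set (Submodule K V)) (P : Set (Set (Submodule K V))) : Prop :=
  IsPartitionOf A P ∧ IsIndepPartition P ∧
    ∀ X ∈ lat A, X ≠ (⊤ : Submodule K V) →
      ∃ B ∈ P, ∃ H, B ∩ locArr A X = {H}

/-- An arrangement is factored (nice) if it admits a nice partition. -/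
def IsFactored {K V : Type*} [Field K] [AddCommGroup V] [Module K V]
    (A : Set (Submodule K V)) : Prop :=
  ∃ P, IsNicePartition A P

/-- Inductively factored arrangements (in coordinate spaces `K^d`, restrictions
being transported to a coordinate space by a linear isomorphism). -/
inductive IndFactored (K : Type) [Field K] :
    (d : ℕ) → Set (Submodule K (Fin d → K)) → Set (Set (Submodule K (Fin d → K))) → Prop
  | empty (d : ℕ) : IndFactored K d ∅ ∅
  | step (d : ℕ) (A : Set (Submodule K (Fin d → K)))
      (P : Set (Set (Submodule K (Fin d → K))))
      (B₁ : Set (Submodule K (Fin d → K))) (H₀ : Submodule K (Fin d → K))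
      (e : ℕ) (φ : ↥H₀ ≃ₗ[K] (Fin e → K))
      (hB₁ : B₁ ∈ P) (hH₀B : H₀ ∈ B₁) (hH₀A : H₀ ∈ A)
      (hbij : Set.BijOn (fun H => Submodule.comap H₀.subtype H) (A \ B₁)
        ((fun H => Submodule.comap H₀.subtype H) '' (A \ {H₀})))
      (hdel : IndFactored K d (A \ {H₀})
        {C | ∃ B ∈ P, C = B ∩ (A \ {H₀}) ∧ C.Nonempty})
      (hres : IndFactored K e
        ((fun Y => Submodule.map (φ : ↥H₀ →ₗ[K] (Fin e → K)) Y) ''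
          ((fun H => Submodule.comap H₀.subtype H) '' (A \ {H₀})))
        {C | ∃ B ∈ P, B ≠ B₁ ∧
          C = (fun Y => Submodule.map (φ : ↥H₀ →ₗ[K] (Fin e → K)) Y) ''
            ((fun H => Submodule.comap H₀.subtype H) '' B)}) :
      IndFactored K d A P

/-- Inductively free arrangements with their multisets of exponents. -/
inductive IndFree (K : Type) [Field K] :
    (d : ℕ) → Set (Submodule K (Fin d → K)) → Multiset ℕ → Prop
  | empty (d : ℕ) : IndFree K d ∅ (Multiset.replicate d 0)
  | step (d : ℕ) (A : Set (Submodule K (Fin d → K))) (H₀ : Submodule K (Fin d → K))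
      (m : ℕ) (φ : ↥H₀ ≃ₗ[K] (Fin m → K)) (E : Multiset ℕ) (e : ℕ)
      (hH₀ : H₀ ∈ A)
      (hdel : IndFree K d (A \ {H₀}) (e ::ₘ E))
      (hres : IndFree K m
        ((fun Y => Submodule.map (φ : ↥H₀ →ₗ[K] (Fin m → K)) Y) ''
          ((fun H => Submodule.comap H₀.subtype H) '' (A \ {H₀}))) E) :
      IndFree K d A ((e+1) ::ₘ E)

/-! ## Asphericity -/

/-- The complement of (the union of) a complex arrangement in `ℂ^n`. -/
def arrComp {n : ℕ} (A : Set (Submodule ℂ (Fin n → ℂ))) : Set (Fin n → ℂ) :=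
  {v | ∀ H ∈ A, v ∉ H}

/-- A space is aspherical if all its homotopy groups `π_m`, `m ≥ 2`, vanish. -/
def IsAspherical (X : Type*) [TopologicalSpace X] : Prop :=
  ∀ (x : X) (m : ℕ), 2 ≤ m → Subsingleton (HomotopyGroup (Fin m) X x)

/-- A complex arrangement is `K(π,1)` if its complement is aspherical. -/
def IsKPi1 {n : ℕ} (A : Set (Submodule ℂ (Fin n → ℂ))) : Prop :=
  IsAspherical ↥(arrComp A)

/-! ## Formality -/

/-- Formality: all linear dependencies among (any choice of) defining forms of the
hyperplanes are generated by the dependencies supported on rank-two flats. -/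
def IsFormal {K V : Type*} [Field K] [AddCommGroup V] [Module K V]
    (A : Set (Submodule K V)) : Prop :=
  ∀ α : Submodule K V → (V →ₗ[K] K),
    (∀ H ∈ A, LinearMap.ker (α H) = H) →
    ∀ c : Submodule K V →₀ K, ↑c.support ⊆ A →
      (∑ H ∈ c.support, c H • α H) = 0 →
      c ∈ Submodule.span K
        {r : Submodule K V →₀ K | ↑r.support ⊆ A ∧
          (∑ H ∈ r.support, r H • α H) = 0 ∧
          ∃ X ∈ lat A, Module.finrank K (V ⧸ X) = 2 ∧ ∀ H ∈ r.support, X ≤ H}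

/-- Combinatorial formality. -/
def IsCombFormal {K V : Type*} [Field K] [AddCommGroup V] [Module K V]
    (A : Set (Submodule K V)) : Prop :=
  IsFormal A ∧ ∀ (K' : Type) [Field K'] (m : ℕ) (B : Set (Submodule K' (Fin m → K'))),
    IsCentralArr B → Nonempty (↥(lat B) ≃o ↥(lat A)) → IsFormal B

/-! ## Line closure -/

/-- `C` is a line-closed subset of the arrangement `A`. -/
def IsLineClosed {K V : Type*} [Field K] [AddCommGroup V] [Module K V]
    (A C : Set (Submodule K V)) : Prop :=
  ∀ H ∈ C, ∀ H' ∈ C, {H'' | H'' ∈ A ∧ H ⊓ H' ≤ H''} ⊆ C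

/-- The line closure of `B` in `A`. -/
def lineClosure {K V : Type*} [Field K] [AddCommGroup V] [Module K V]
    (A B : Set (Submodule K V)) : Set (Submodule K V) :=
  ⋂₀ {C | B ⊆ C ∧ C ⊆ A ∧ IsLineClosed A C}

/-! ## MAT-freeness -/

/-- MAT-freeness of an arrangement in `K^n`. -/
def IsMATFree (K : Type*) [Field K] {n : ℕ}
    (A : Set (Submodule K (Fin n → K))) : Prop :=
  ∃ (m : ℕ) (π : Fin m → Set (Submodule K (Fin n → K))),
    (⋃ i, π i) = A ∧
    (∀ i, (π i).Nonempty) ∧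
    (∀ i j, i ≠ j → Disjoint (π i) (π j)) ∧
    ∀ j : Fin m,
      (n = (π j).ncard + Module.finrank K ↥(sInf (π j) : Submodule K (Fin n → K))) ∧
      (¬ (SetLike.coe (sInf (π j) : Submodule K (Fin n → K)) ⊆
          ⋃ H ∈ {H | ∃ i : Fin m, i < j ∧ H ∈ π i}, SetLike.coe H)) ∧
      ∀ H ∈ π j,
        {H' | ∃ i : Fin m, i < j ∧ H' ∈ π i}.ncard =
          ((fun H' => H' ⊓ H) '' {H' | ∃ i : Fin m, i < j ∧ H' ∈ π i}).ncard + j.1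

/-! ## Subarrangements by size, supersolvability -/

/-- The ideal subarrangement `A_G^s` of hyperplanes `H_I` with `|I| ≤ s`. -/
noncomputable def AGs (K : Type*) [Field K] {n : ℕ} (G : SimpleGraph (Fin n)) (s : ℕ) :
    Set (Submodule K (Fin n → K)) :=
  hypI n K '' {I | I ∈ connSets G ∧ I.card ≤ s}

/-- The closure of a subspace in the intersection lattice of `A`. -/
noncomputable def flatClosure {K V : Type*} [Field K] [AddCommGroup V] [Module K V]
    (A : Set (Submodule K V)) (Z : Submodule K V) : Submodule K V :=
  sInf {H | H ∈ A ∧ Z ≤ H}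

/-- The rank (codimension) of a subspace of `K^n`. -/
noncomputable def arrRank (K : Type*) [Field K] {n : ℕ}
    (X : Submodule K (Fin n → K)) : ℕ :=
  n - Module.finrank K ↥X

/-- A modular flat of an arrangement. -/
noncomputable def IsModularFlat (K : Type*) [Field K] {n : ℕ}
    (A : Set (Submodule K (Fin n → K))) (X : Submodule K (Fin n → K)) : Prop :=
  X ∈ lat A ∧ ∀ Y ∈ lat A,
    arrRank K X + arrRank K Y =
      arrRank K (X ⊓ Y) + arrRank K (flatClosure A (X ⊔ Y))

/-- Supersolvability: a maximal chain of modular flats in `L(A)`. -/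
noncomputable def IsSupersolvable (K : Type*) [Field K] {n : ℕ}
    (A : Set (Submodule K (Fin n → K))) : Prop :=
  ∃ c : ℕ → Submodule K (Fin n → K),
    c 0 = ⊤ ∧ c (arrRank K (sInf A)) = sInf A ∧
    (∀ i ≤ arrRank K (sInf A), IsModularFlat K A (c i) ∧ arrRank K (c i) = i) ∧
    ∀ i < arrRank K (sInf A), c (i + 1) ≤ c i

/-! `ψ` and `φ` agree on every flat that is an intersection of hyperplanes on which they
already agree, and on every hyperplane that is a sum of such flats: for the latter,
`φ H = ∑ φ X = ∑ ψ X ≤ ψ H`, and `φ H` is a hyperplane while `ψ H ≠ V`. Climbing the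
generation steps `Gen_i(A, S)` therefore gives `ψ = φ` on all of `A`, so `φ` sends
each `H ∈ A` to a hyperplane lying in `L(B)`, that is, into `B`. The same argument
for `ψ⁻¹`, `φ⁻¹` and `T` gives the reverse inclusion. -/

section AgreeSet

variable {α : Type*} [CompleteLattice α] {s t : Set α}

def agreeSet (ψ : s ≃o t) (e : α ≃o α) : Set α :=
  {x | ∃ hx : x ∈ s, (ψ ⟨x, hx⟩ : α) = e x}

lemma agreeSet_symm {ψ : s ≃o t} {e : α ≃o α} {x : α} (hx : x ∈ agreeSet ψ e) :
    e x ∈ agreeSet ψ.symm e.symm := by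
  obtain ⟨hxs, hψx⟩ := hx
  refine ⟨hψx ▸ (ψ ⟨x, hxs⟩).2, ?_⟩
  rw [e.symm_apply_apply, ψ.symm_apply_eq.2 (Subtype.ext hψx.symm)]

lemma sInf_mem_agreeSet (hs : ∀ J ⊆ s, sInf J ∈ s) (ht : ∀ J ⊆ t, sInf J ∈ t)
    {ψ : s ≃o t} {e : α ≃o α} {J : Set α} (hJ : J ⊆ agreeSet ψ e) :
    sInf J ∈ agreeSet ψ e := by
  have hJs : J ⊆ s := fun y hy => (hJ hy).1
  have heJ : e (sInf J) ∈ t := by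
    rw [e.map_sInf, ← sInf_image]
    refine ht _ ?_
    rintro _ ⟨y, hy, rfl⟩
    exact (hJ hy).2 ▸ (ψ ⟨y, hJs hy⟩).2
  refine ⟨hs J hJs, le_antisymm ?_ ?_⟩
  · rw [e.map_sInf]
    exact le_iInf₂ fun y hy => (hJ hy).2 ▸ ψ.monotone (Subtype.mk_le_mk.2 (sInf_le hy))
  · have hsymm : ψ.symm ⟨e (sInf J), heJ⟩ ≤ ⟨sInf J, hs J hJs⟩ :=
      Subtype.mk_le_mk.2 <| le_sInf fun y hy => Subtype.mk_le_mk.1 <|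
        (ψ.symm_apply_le (x := ⟨y, hJs hy⟩)).2 <|
          Subtype.mk_le_mk.2 ((hJ hy).2 ▸ e.monotone (sInf_le hy))
    exact Subtype.mk_le_mk.1 (ψ.symm_apply_le.1 hsymm)

lemma sSup_mem_agreeSet_of_isCoatom (htop : ⊤ ∈ s) {ψ : s ≃o t} {e : α ≃o α}
    {J : Set α} (hJ : J ⊆ agreeSet ψ e) (hs : sSup J ∈ s) (hco : IsCoatom (sSup J)) :
    sSup J ∈ agreeSet ψ e := by
  refine ⟨hs, ?_⟩
  have hle : e (sSup J) ≤ ψ ⟨sSup J, hs⟩ := by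
    rw [e.map_sSup]
    exact iSup₂_le fun y hy => (hJ hy).2 ▸ ψ.monotone (Subtype.mk_le_mk.2 (le_sSup hy))
  have hne : (ψ ⟨sSup J, hs⟩ : α) ≠ ⊤ := fun hψtop => by
    have : ψ ⟨⊤, htop⟩ ≤ ψ ⟨sSup J, hs⟩ := by
      rw [← Subtype.coe_le_coe, hψtop]
      exact le_top
    exact hco.1 (top_le_iff.1 (Subtype.mk_le_mk.1 (ψ.le_iff_le.1 this)))
  exact (((e.isCoatom_iff _).2 hco).le_iff.1 hle).resolve_left hne

end AgreeSet

section Arrangement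

variable {K V : Type*} [Field K] [AddCommGroup V] [Module K V]
  {A B S : Set (Submodule K V)}

lemma mem_lat_of_mem {H : Submodule K V} (hH : H ∈ A) : H ∈ lat A :=
  ⟨{H}, Set.singleton_subset_iff.2 hH, sInf_singleton.symm⟩

lemma sInf_mem_lat {J : Set (Submodule K V)} (hJ : J ⊆ lat A) : sInf J ∈ lat A := by
  refine ⟨{H | H ∈ A ∧ sInf J ≤ H}, fun H hH => hH.1,
    le_antisymm (le_sInf fun H hH => hH.2) (le_sInf fun X hX => ?_)⟩
  obtain ⟨C, hCA, rfl⟩ := hJ hX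
  exact le_sInf fun H hH => sInf_le ⟨hCA hH, sInf_le_of_le hX (sInf_le hH)⟩

lemma top_mem_lat : (⊤ : Submodule K V) ∈ lat A :=
  sInf_empty (α := Submodule K V) ▸ sInf_mem_lat (Set.empty_subset _)

lemma mem_of_isCoatom_of_mem_lat (hA : ∀ H ∈ A, H ≠ ⊤) {X : Submodule K V}
    (hX : X ∈ lat A) (hco : IsCoatom X) : X ∈ A := by
  obtain ⟨C, hCA, rfl⟩ := hX
  obtain ⟨H, hH⟩ : C.Nonempty :=
    Set.nonempty_iff_ne_empty.2 fun hC => hco.1 (hC ▸ sInf_empty)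
  exact (hco.le_iff.1 (sInf_le hH)).resolve_left (hA H (hCA hH)) ▸ hCA hH

lemma subset_of_genSpan_eq (hgen : genSpan A S = A) : S ⊆ A :=
  hgen ▸ Set.subset_iUnion (Gen A S) 0

variable {ψ : lat A ≃o lat B} {e : Submodule K V ≃o Submodule K V}

lemma lat_subset_agreeSet {G : Set (Submodule K V)} (hG : G ⊆ agreeSet ψ e) :
    lat G ⊆ agreeSet ψ e := by
  rintro _ ⟨C, hCG, rfl⟩
  exact sInf_mem_agreeSet (fun _ => sInf_mem_lat) (fun _ => sInf_mem_lat) (hCG.trans hG)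

lemma gen_subset_agreeSet (hA : ∀ H ∈ A, IsCoatom H) (hS : S ⊆ agreeSet ψ e) :
    ∀ i, Gen A S i ⊆ agreeSet ψ e
  | 0 => hS
  | i + 1 => by
    rintro _ ⟨hHA, J, hJ, rfl⟩
    exact sSup_mem_agreeSet_of_isCoatom top_mem_lat
      (hJ.trans (lat_subset_agreeSet (gen_subset_agreeSet hA hS i)))
      (mem_lat_of_mem hHA) (hA _ hHA)

lemma image_subset_of_genSpan_eq (hA : ∀ H ∈ A, IsCoatom H) (hB : ∀ H ∈ B, H ≠ ⊤)
    (hgen : genSpan A S = A) (hS : S ⊆ agreeSet ψ e) : e '' A ⊆ B := by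
  rintro _ ⟨H, hHA, rfl⟩
  obtain ⟨i, hi⟩ := Set.mem_iUnion.1 (hgen.symm ▸ hHA : H ∈ genSpan A S)
  obtain ⟨hHlat, hψH⟩ := gen_subset_agreeSet hA hS i hi
  exact mem_of_isCoatom_of_mem_lat hB (hψH ▸ (ψ ⟨H, hHlat⟩).2)
    ((e.isCoatom_iff H).2 (hA H hHA))

end Arrangement

theorem map_eq_of_gen_general (K : Type) [Field K] (V : Type) [AddCommGroup V] [Module K V]
    (A B S T : Set (Submodule K V)) (hA : IsCentralArr A) (hB : IsCentralArr B)
    (hgenA : genSpan A S = A) (hgenB : genSpan B T = B)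
    (ψ : ↥(lat A) ≃o ↥(lat B)) (φ : V ≃ₗ[K] V)
    (hψφ : ∀ H : Submodule K V, H ∈ S → ∀ hH : H ∈ lat A,
      ((ψ ⟨H, hH⟩ : Submodule K V)) = Submodule.map (φ : V →ₗ[K] V) H)
    (hφS : (fun H => Submodule.map (φ : V →ₗ[K] V) H) '' S = T) :
    (fun H => Submodule.map (φ : V →ₗ[K] V) H) '' A = B := by
  set e := Submodule.orderIsoMapComap φ
  have hS : S ⊆ agreeSet ψ e := fun H hH =>
    ⟨mem_lat_of_mem (subset_of_genSpan_eq hgenA hH), hψφ H hH _⟩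
  have hT : T ⊆ agreeSet ψ.symm e.symm :=
    hφS ▸ Set.image_subset_iff.2 fun H hH => agreeSet_symm (hS hH)
  have hAB := image_subset_of_genSpan_eq hA.2 (fun H hH => (hB.2 H hH).1) hgenA hS
  have hBA := image_subset_of_genSpan_eq hB.2 (fun H hH => (hA.2 H hH).1) hgenB hT
  exact hAB.antisymm fun Y hY => ⟨e.symm Y, hBA ⟨Y, hY, rfl⟩, e.apply_symm_apply Y⟩

/-- If `S` generates `A`, `T` generates `B`, and a poset
isomorphism `ψ : L(A) → L(B)` agrees on `S` with some `φ ∈ GL(V)` carrying `S`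
onto `T`, then `φ` maps `A` onto `B`. -/
theorem map_eq_of_gen (K : Type) [Field K] (V : Type) [AddCommGroup V] [Module K V]
    (A B S T : Set (Submodule K V)) (hA : IsCentralArr A) (hB : IsCentralArr B)
    (hS : S.Nonempty) (hT : T.Nonempty)
    (hgenA : genSpan A S = A) (hgenB : genSpan B T = B)
    (ψ : ↥(lat A) ≃o ↥(lat B)) (φ : V ≃ₗ[K] V)
    (hψφ : ∀ H : Submodule K V, H ∈ S → ∀ hH : H ∈ lat A,
      ((ψ ⟨H, hH⟩ : Submodule K V)) = Submodule.map (φ : V →ₗ[K] V) H)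
    (hφS : (fun H => Submodule.map (φ : V →ₗ[K] V) H) '' S = T) :
    (fun H => Submodule.map (φ : V →ₗ[K] V) H) '' A = B :=
  map_eq_of_gen_general K V A B S T hA hB hgenA hgenB ψ φ hψφ hφS
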